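/- arXiv:2310.19414 — 3 statements merged into one kernel-verified Lean document; each statement's English description precedes it below -/
import Mathlib

section
/- Let f ∈ T_{S(I)}(X,P). Then f is idempotent if and only if (i) χ^(f) is an idempotent of S(I), (ii) for each i in the image of χ^(f), the restriction of f to X_i is an idempotent map of X_i (note i χ^(f) = i for such i), and (iii) for each i not in the image of χ^(f), X_i f ⊆ X_{i χ^(f)} f. -/
open Function Set

/-- `c : I → I` is the character of `f` w.r.t. the partition of `X` whose blocks are
the fibers of `idx : X → I`: the block `X_i = idx⁻¹{i}` is mapped by `f` into `X_{c i}`. -/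
def IsChar {X I : Type*} (idx : X → I) (f : X → X) (c : I → I) : Prop :=
  ∀ x, c (idx x) = idx (f x)

/-- `f` preserves the partition, i.e. `f ∈ T(X,P)`. -/
def PresP {X I : Type*} (idx : X → I) (f : X → X) : Prop :=
  ∃ c, IsChar idx f c

/-- `f ∈ T_{S(I)}(X,P)`: the character of `f` lies in `S`. -/
def InTS {X I : Type*} (idx : X → I) (S : Set (I → I)) (f : X → X) : Prop :=
  ∃ c ∈ S, IsChar idx f c

/-- `α` is a unit of the (sub)monoid `S` of `T(I)`. -/
def IsUnitS {I : Type*} (S : Set (I → I)) (α : I → I) : Prop :=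
  α ∈ S ∧ ∃ β ∈ S, (∀ i, β (α i) = i) ∧ (∀ i, α (β i) = i)

/-- `u` is a unit of the monoid `T_{S(I)}(X,P)`. -/
def IsUnitTS {X I : Type*} (idx : X → I) (S : Set (I → I)) (u : X → X) : Prop :=
  InTS idx S u ∧ ∃ v, InTS idx S v ∧ (∀ x, v (u x) = x) ∧ (∀ x, u (v x) = x)
namespace IsChar

variable {X I : Type*} {idx : X → I} {f g : X → X} {c d : I → I}

theorem comp (hf : IsChar idx f c) (hg : IsChar idx g d) : IsChar idx (g ∘ f) (d ∘ c) :=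
  fun x => by rw [comp_apply, comp_apply, hf x, hg (f x)]

theorem unique (hidx : Surjective idx) (hc : IsChar idx f c) (hd : IsChar idx f d) : c = d := by
  funext i
  obtain ⟨x, rfl⟩ := hidx i
  rw [hc x, hd x]

theorem idempotent_of_idempotent (hidx : Surjective idx) (hf : IsChar idx f c)
    (hfid : ∀ x, f (f x) = f x) (i : I) : c (c i) = c i := by
  have hff : f ∘ f = f := funext hfid
  have hcc : IsChar idx f (c ∘ c) := hff ▸ hf.comp hf
  exact congrFun (hcc.unique hidx hf) i

theorem idx_apply_of_mem_range (hf : IsChar idx f c) (hcid : ∀ i, c (c i) = c i) {i : I}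
    (hi : i ∈ range c) {x : X} (hx : idx x = i) : idx (f x) = i := by
  obtain ⟨j, rfl⟩ := hi
  rw [← hf x, hx, hcid]

theorem image_fiber_subset (hf : IsChar idx f c) (hfid : ∀ x, f (f x) = f x) (i : I) :
    f '' (idx ⁻¹' {i}) ⊆ f '' (idx ⁻¹' {c i}) := by
  rintro _ ⟨x, hx, rfl⟩
  refine ⟨f x, ?_, hfid x⟩
  rw [mem_preimage, mem_singleton_iff] at hx ⊢
  rw [← hf x, hx]

end IsChar

/-- A block outside the range of `c` is mapped into the image of a block inside it,
on which `f` is already idempotent. -/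
theorem idempotent_of_fiberwise {X I : Type*} {idx : X → I} {f : X → X} {c : I → I}
    (hfix : ∀ i ∈ range c, ∀ x, idx x = i → f (f x) = f x)
    (himg : ∀ i ∉ range c, f '' (idx ⁻¹' {i}) ⊆ f '' (idx ⁻¹' {c i})) (x : X) :
    f (f x) = f x := by
  by_cases hx : idx x ∈ range c
  · exact hfix _ hx x rfl
  · obtain ⟨z, hz, hfz⟩ := himg _ hx ⟨x, rfl, rfl⟩
    rw [← hfz]
    exact hfix _ ⟨idx x, rfl⟩ z hz

theorem idempotent_iff_general {X I : Type*} (idx : X → I)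
    (hsurj : Function.Surjective idx)
    (f : X → X) (cf : I → I) (hf : IsChar idx f cf) :
    (∀ x, f (f x) = f x) ↔
      ((∀ i, cf (cf i) = cf i) ∧
       (∀ i ∈ Set.range cf, ∀ x, idx x = i → idx (f x) = i ∧ f (f x) = f x) ∧
       (∀ i ∉ Set.range cf, f '' (idx ⁻¹' {i}) ⊆ f '' (idx ⁻¹' {cf i}))) := by
  constructor
  · intro hfid
    have hcid := hf.idempotent_of_idempotent hsurj hfid
    exact ⟨hcid, fun i hi x hx => ⟨hf.idx_apply_of_mem_range hcid hi hx, hfid x⟩,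
      fun i _ => hf.image_fiber_subset hfid i⟩
  · rintro ⟨-, hfix, himg⟩
    exact idempotent_of_fiberwise (fun i hi x hx => (hfix i hi x hx).2) himg

theorem idempotent_iff {X I : Type*} (idx : X → I)
    (hsurj : Function.Surjective idx) (S : Set (I → I))
    (hS : ∀ α ∈ S, ∀ β ∈ S, (fun i => β (α i)) ∈ S)
    (f : X → X) (cf : I → I) (hf : IsChar idx f cf) (hcf : cf ∈ S) :
    (∀ x, f (f x) = f x) ↔
      ((∀ i, cf (cf i) = cf i) ∧
       (∀ i ∈ Set.range cf, ∀ x, idx x = i → idx (f x) = i ∧ f (f x) = f x) ∧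
       (∀ i ∉ Set.range cf, f '' (idx ⁻¹' {i}) ⊆ f '' (idx ⁻¹' {cf i}))) :=
  idempotent_iff_general idx hsurj f cf hf
end

section
/- The semigroup T(X,P) is unit-regular if and only if X is finite and the partition P is trivial. -/
open Function Set

/-!
A trivial partition is preserved by every map, so `T(X,P) = T(X)`, and `T(X)` is unit-regular
exactly when `X` is finite: for finite `X` a section of `f` on its range extends to a permutation
`u` with `f u f = f`, while an infinite `X` carries an injective non-surjective `f`, and
`f u f = f` would make `f` the inverse of the permutation `u`.
If the partition is not trivial, pick distinct `a, b` in one block `A` and a point outside `A`,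
and let `f` send `A` to `a` and everything else to `b`. Any `u` with `f u f = f` then sends `a`
into `A` and `b` outside `A`, so `u` does not even preserve the partition: `T(X,P)` is not regular.
-/

namespace Function

theorem exists_perm_apply_apply_eq_of_finite {X : Type*} [Finite X] (f : X → X) :
    ∃ u : Equiv.Perm X, ∀ x, f (u (f x)) = f x := by
  classical
  let u := (Equiv.ofInjective _ (rangeSplitting_injective f)).extendSubtype
  refine ⟨u, fun x => ?_⟩
  rw [Equiv.extendSubtype_apply_of_mem _ _ (mem_range_self x)]
  exact apply_rangeSplitting f ⟨f x, mem_range_self x⟩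

theorem exists_injective_not_surjective_of_infinite {X : Type*} [Infinite X] :
    ∃ f : X → X, Injective f ∧ ¬Surjective f := by
  obtain ⟨e⟩ : Nonempty (Option X ≃ X) := Cardinal.eq.mp <| by
    rw [Cardinal.mk_option, Cardinal.add_one_of_aleph0_le (Cardinal.aleph0_le_mk X)]
  refine ⟨e ∘ some, e.injective.comp (Option.some_injective X), fun hsurj => ?_⟩
  obtain ⟨x, hx⟩ := hsurj (e none)
  exact Option.some_ne_none x (e.injective hx)

theorem finite_iff_forall_exists_perm_apply_apply_eq {X : Type*} :
    Finite X ↔ ∀ f : X → X, ∃ u : Equiv.Perm X, ∀ x, f (u (f x)) = f x := by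
  refine ⟨fun _ => exists_perm_apply_apply_eq_of_finite, fun H => ?_⟩
  by_contra hfin
  have := not_finite_iff_infinite.mp hfin
  obtain ⟨f, hinj, hsurj⟩ := exists_injective_not_surjective_of_infinite (X := X)
  obtain ⟨u, hu⟩ := H f
  have hf : f = u.symm := funext fun x => u.eq_symm_apply.mpr (hinj (hu x))
  exact hsurj (hf ▸ u.symm.surjective)

end Function

section Partition

variable {X I : Type*} {idx : X → I}

def IsTrivialPartition (idx : X → I) : Prop :=
  (∀ i : I, (idx ⁻¹' {i}).Subsingleton) ∨ ∀ x y : X, idx x = idx y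

theorem presP_of_injective (hidx : Injective idx) (g : X → X) : PresP idx g :=
  ⟨extend idx (idx ∘ g) id, fun x => hidx.extend_apply _ _ x⟩

theorem presP_of_forall_eq (hidx : ∀ x y : X, idx x = idx y) (g : X → X) : PresP idx g :=
  ⟨id, fun x => hidx x (g x)⟩

theorem IsTrivialPartition.presP (htriv : IsTrivialPartition idx) (g : X → X) :
    PresP idx g := by
  rcases htriv with hsingle | hone
  · exact presP_of_injective (fun x y hxy => hsingle (idx y) hxy rfl) g
  · exact presP_of_forall_eq hone g

theorem PresP.apply_eq_apply {u : X → X} (hu : PresP idx u) {a b : X} (hab : idx a = idx b) :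
    idx (u a) = idx (u b) := by
  obtain ⟨c, hc⟩ := hu
  rw [← hc, ← hc, hab]

theorem isTrivialPartition_of_regular
    (H : ∀ f : X → X, PresP idx f → ∃ u, PresP idx u ∧ ∀ x, f (u (f x)) = f x) :
    IsTrivialPartition idx := by
  classical
  by_contra hnontriv
  unfold IsTrivialPartition Set.Subsingleton at hnontriv
  push Not at hnontriv
  obtain ⟨⟨-, a, rfl, b, hb, hab⟩, x, y, hxy⟩ := hnontriv
  replace hb : idx b = idx a := hb
  obtain ⟨z, hz⟩ : ∃ z, idx z ≠ idx a := by
    by_cases hx : idx x = idx a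
    · exact ⟨y, fun hy => hxy (hx.trans hy.symm)⟩
    · exact ⟨x, hx⟩
  let f : X → X := fun w => if idx w = idx a then a else b
  have hf_eq_a : ∀ w, f w = a ↔ idx w = idx a := fun w => by
    by_cases hw : idx w = idx a <;> simp [f, hw, Ne.symm hab]
  have hf_pres : PresP idx f := ⟨fun _ => idx a, fun w => by
    by_cases hw : idx w = idx a <;> simp [f, hw, hb]⟩
  obtain ⟨u, hu, hreg⟩ := H f hf_pres
  have hua : idx (u a) = idx a := (hf_eq_a _).mp <| by
    simpa only [(hf_eq_a a).mpr rfl] using hreg a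
  have hub : idx (u b) ≠ idx a := fun hub => hab <| by
    have hfz : f z = b := if_neg hz
    rw [← hfz, ← hreg z, hfz, (hf_eq_a _).mpr hub]
  exact hub (hu.apply_eq_apply hb.symm ▸ hua)

end Partition

theorem TXP_unit_regular_iff_general {X I : Type*} (idx : X → I) :
    (∀ f : X → X, PresP idx f →
        ∃ u, (PresP idx u ∧
              ∃ v, PresP idx v ∧ (∀ x, v (u x) = x) ∧ (∀ x, u (v x) = x)) ∧
          ∀ x, f (u (f x)) = f x) ↔
      (Finite X ∧
        ((∀ i : I, (idx ⁻¹' {i}).Subsingleton) ∨ (∀ x y : X, idx x = idx y))) := by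
  constructor
  · intro H
    have htriv : IsTrivialPartition idx := isTrivialPartition_of_regular fun f hf =>
      let ⟨u, ⟨hu, _⟩, hreg⟩ := H f hf
      ⟨u, hu, hreg⟩
    refine ⟨finite_iff_forall_exists_perm_apply_apply_eq.mpr fun f => ?_, htriv⟩
    obtain ⟨u, ⟨-, v, -, hvu, huv⟩, hreg⟩ := H f (htriv.presP f)
    exact ⟨⟨u, v, hvu, huv⟩, hreg⟩
  · rintro ⟨hfin, htriv : IsTrivialPartition idx⟩ f -
    obtain ⟨u, hreg⟩ := exists_perm_apply_apply_eq_of_finite f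
    exact ⟨u, ⟨htriv.presP u, u.symm, htriv.presP _, u.symm_apply_apply, u.apply_symm_apply⟩,
      hreg⟩

theorem TXP_unit_regular_iff {X I : Type*} [Nonempty X] (idx : X → I)
    (hsurj : Function.Surjective idx) :
    (∀ f : X → X, PresP idx f →
        ∃ u, (PresP idx u ∧
              ∃ v, PresP idx v ∧ (∀ x, v (u x) = x) ∧ (∀ x, u (v x) = x)) ∧
          ∀ x, f (u (f x)) = f x) ↔
      (Finite X ∧
        ((∀ i : I, (idx ⁻¹' {i}).Subsingleton) ∨ (∀ x y : X, idx x = idx y))) :=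
  TXP_unit_regular_iff_general idx
end

section
/- Assume id_I ∈ S(I). For f, g ∈ T_{S(I)}(X,P): L_f ≤ L_g in T_{S(I)}(X,P) (i.e., f ∈ T_{S(I)}(X,P)^1 g, equivalently f = hg for some h in the monoid) if and only if there exists α ∈ S(I) with χ^(f) = α χ^(g) and X_i f ⊆ X_{iα} g for all i ∈ I. -/
open Function Set

/-! If `f = h g`, the character of `h` is the required `α`: characters compose, and they are
unique because every block is nonempty. Conversely, the inclusions `X_i f ⊆ X_{iα} g` let us
choose, for each `x`, a point of `X_{α(idx x)}` that `g` sends to `f x`; this defines `h`. -/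

section
variable {X I : Type*} {idx : X → I}

theorem IsChar.comp_s14 {h g : X → X} {ch cg : I → I} (hh : IsChar idx h ch) (hg : IsChar idx g cg) :
    IsChar idx (fun x => g (h x)) (fun i => cg (ch i)) := fun x => by
  simp only [hh x, hg (h x)]

theorem IsChar.eq_of_surjective (hsurj : Surjective idx) {f : X → X} {c c' : I → I}
    (hc : IsChar idx f c) (hc' : IsChar idx f c') : c = c' := by
  funext i
  obtain ⟨x, rfl⟩ := hsurj i
  rw [hc x, hc' x]

theorem IsChar.image_comp_fiber_subset {h : X → X} {α : I → I} (hh : IsChar idx h α)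
    (g : X → X) (i : I) :
    (fun x => g (h x)) '' (idx ⁻¹' {i}) ⊆ g '' (idx ⁻¹' {α i}) := by
  rintro _ ⟨x, rfl, rfl⟩
  exact ⟨h x, (hh x).symm, rfl⟩

theorem exists_isChar_comp_eq_of_image_fiber_subset {f g : X → X} {α : I → I}
    (hsub : ∀ i, f '' (idx ⁻¹' {i}) ⊆ g '' (idx ⁻¹' {α i})) :
    ∃ h, IsChar idx h α ∧ ∀ x, g (h x) = f x := by
  choose h hh hgh using fun x => hsub (idx x) ⟨x, rfl, rfl⟩
  exact ⟨h, fun x => (hh x).symm, hgh⟩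

end

theorem L_preorder_iff_general {X I : Type*} (idx : X → I)
    (hsurj : Function.Surjective idx) (S : Set (I → I))
    (f g : X → X) (cf cg : I → I)
    (hf : IsChar idx f cf)
    (hg : IsChar idx g cg) :
    (∃ h, InTS idx S h ∧ ∀ x, g (h x) = f x) ↔
      ∃ α ∈ S, (∀ i, cg (α i) = cf i) ∧
        ∀ i : I, f '' (idx ⁻¹' {i}) ⊆ g '' (idx ⁻¹' {α i}) := by
  constructor
  · rintro ⟨h, ⟨α, hαS, hα⟩, hgh⟩
    obtain rfl : f = fun x => g (h x) := funext fun x => (hgh x).symm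
    exact ⟨α, hαS, congrFun ((hα.comp_s14 hg).eq_of_surjective hsurj hf), hα.image_comp_fiber_subset g⟩
  · rintro ⟨α, hαS, -, hsub⟩
    obtain ⟨h, hα, hgh⟩ := exists_isChar_comp_eq_of_image_fiber_subset hsub
    exact ⟨h, ⟨α, hαS, hα⟩, hgh⟩

theorem L_preorder_iff {X I : Type*} (idx : X → I)
    (hsurj : Function.Surjective idx) (S : Set (I → I))
    (hS : ∀ α ∈ S, ∀ β ∈ S, (fun i => β (α i)) ∈ S)
    (hid : (id : I → I) ∈ S)
    (f g : X → X) (cf cg : I → I)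
    (hf : IsChar idx f cf) (hcf : cf ∈ S)
    (hg : IsChar idx g cg) (hcg : cg ∈ S) :
    (∃ h, InTS idx S h ∧ ∀ x, g (h x) = f x) ↔
      ∃ α ∈ S, (∀ i, cg (α i) = cf i) ∧
        ∀ i : I, f '' (idx ⁻¹' {i}) ⊆ g '' (idx ⁻¹' {α i}) :=
  L_preorder_iff_general idx hsurj S f g cf cg hf hg
end
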